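/- Let Λ : ℕ → ℝ be a sequence of nonnegative reals with Λ(1) = 0, suppose the Dirichlet series f(s) = Σ_{n≥1} Λ(n)/n^s converges for all real s > 1, and suppose f(σ) ≤ −2/(σ−β) + 2/(σ−1) + A for all σ > 1, where 1/2 ≤ β < 1 and A > 0, while f(σ) ≥ B·X^{2(1−σ)}/(σ−1) for all σ ∈ (1, 2] with constants B > 0 and X ≥ 3. Then 1 − β ≥ c/log X for a constant c > 0 depending only on A and B. -/
import Mathlib


theorem stmt_12 (A B : ℝ) (hA : 0 < A) (hB : 0 < B) :
    ∃ c > 0, ∀ (Λ : ℕ → ℝ) (f : ℝ → ℝ) (β X : ℝ),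
      (∀ n, 0 ≤ Λ n) → Λ 1 = 0 →
      (∀ σ : ℝ, 1 < σ → HasSum (fun n : ℕ => Λ (n + 1) / ((n : ℝ) + 1) ^ σ) (f σ)) →
      (∀ σ : ℝ, 1 < σ → f σ ≤ -2 / (σ - β) + 2 / (σ - 1) + A) →
      (∀ σ : ℝ, 1 < σ → σ ≤ 2 → B * X ^ (2 * (1 - σ)) / (σ - 1) ≤ f σ) →
      1 / 2 ≤ β → β < 1 → 3 ≤ X →
      c / Real.log X ≤ 1 - β := by
  have hlog2 : (0:ℝ) < Real.log 2 := Real.log_pos (by norm_num)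
  set δ : ℝ := min (Real.log 2 / 2) (B / (4 * A)) with hδdef
  have hδ : 0 < δ := lt_min (by positivity) (by positivity)
  have hδ2 : δ ≤ Real.log 2 / 2 := min_le_left _ _
  have hδB : δ ≤ B / (4 * A) := min_le_right _ _
  have hδlt1 : δ < 1 := lt_of_le_of_lt hδ2 (by
    have := Real.log_two_lt_d9; linarith)
  clear_value δ
  refine ⟨B * δ / 8, by positivity, ?_⟩
  intro Λ f β X _ _ _ hup hlow hβ hβ1 hX
  have hL1 : (1:ℝ) ≤ Real.log X := by
    rw [Real.le_log_iff_exp_le (by linarith : (0:ℝ) < X)]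
    have := Real.exp_one_lt_d9; linarith
  have hL0 : (0:ℝ) < Real.log X := by linarith
  set L := Real.log X with hL
  clear_value L
  set σ : ℝ := 1 + δ / L with hσdef
  clear_value σ
  have hs : 0 < δ / L := by positivity
  have hσ1 : 1 < σ := by rw [hσdef]; linarith
  have hσ1pos : 0 < σ - 1 := by linarith
  have hsle : δ / L ≤ δ := by
    rw [div_le_iff₀ hL0]; nlinarith
  have hσ2 : σ ≤ 2 := by rw [hσdef]; linarith
  have hXpow : X ^ (2 * (1 - σ)) = Real.exp (-(2 * δ)) := by
    rw [Real.rpow_def_of_pos (by linarith : (0:ℝ) < X), ← hL]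
    congr 1
    rw [hσdef]
    field_simp
    ring
  have hexp : (1:ℝ)/2 ≤ Real.exp (-(2 * δ)) := by
    have h1 : Real.exp (-Real.log 2) = 1/2 := by
      rw [Real.exp_neg, Real.exp_log (by norm_num : (0:ℝ) < 2)]; norm_num
    rw [← h1]
    exact Real.exp_le_exp.2 (by linarith)
  have hlow' := hlow σ hσ1 hσ2
  have hup' := hup σ hσ1
  have hσ1' : σ - 1 = δ / L := by rw [hσdef]; ring
  have hlb : B * (1/2) / (σ - 1) ≤ f σ := by
    refine le_trans ?_ hlow'
    gcongr
    rw [hXpow]; nlinarith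
  have hσβ : 0 < σ - β := by linarith
  have hts : σ - 1 ≤ σ - β := by linarith
  have key : B / 2 ≤ 2 * (1 - β) / (σ - β) + A * (σ - 1) := by
    have h := hlb.trans hup'
    have h2 : B * (1/2) ≤ (-2 / (σ - β) + 2 / (σ - 1) + A) * (σ - 1) := by
      rw [div_le_iff₀ hσ1pos] at h; linarith
    have e1 : (-2 / (σ - β) + 2 / (σ - 1) + A) * (σ - 1)
        = 2 * (1 - β) / (σ - β) + A * (σ - 1) := by
      field_simp; ring
    rw [e1] at h2; linarith
  have hAs : A * (σ - 1) ≤ B / 4 := by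
    rw [hσ1']
    calc A * (δ / L) ≤ A * δ := by nlinarith
    _ ≤ A * (B / (4 * A)) := by nlinarith
    _ = B / 4 := by field_simp
  have h1β : 0 ≤ 1 - β := by linarith
  have key2 : B / 4 ≤ 2 * (1 - β) / (σ - 1) := by
    have : 2 * (1 - β) / (σ - β) ≤ 2 * (1 - β) / (σ - 1) :=
      div_le_div_of_nonneg_left (by linarith) hσ1pos hts
    linarith
  rw [le_div_iff₀ hσ1pos, hσ1'] at key2
  have key3 : B * δ / 4 / L ≤ 2 * (1 - β) := by
    calc B * δ / 4 / L = B / 4 * (δ / L) := by ring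
    _ ≤ 2 * (1 - β) := key2
  rw [div_le_iff₀ hL0] at key3
  rw [div_le_iff₀ hL0]
  linarith
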